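/- arXiv:1308.3329 — 2 statements merged into one kernel-verified Lean document; each statement's English description precedes it below -/
import Mathlib

section
/- Every n-player linear congestion game with altruistic social context (G, Γ_V), where V = (v_1,…,v_n) ∈ [0,1]^n and Γ_V has entries γ_{ii} = 1 − v_i and γ_{ij} = v_i for j ≠ i, admits an exact potential function, namely Φ(S) = (1/2)·Σ_{e∈E} [α_e·(n_e(S)(n_e(S)+1) − 2·Σ_{j: e∈s_j} v_j) + 2β_e·Σ_{j: e∈s_j} (1 − v_j)]. -/
open Finset

/-- Congestion of resource `e` in profile `S`: number of players using `e`. -/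
def cong {n : ℕ} {E : Type*} [Fintype E] [DecidableEq E] (S : Fin n → Finset E) (e : E) : ℕ :=
  (Finset.univ.filter fun j => e ∈ S j).card

/-- Cost of player `j` in a linear congestion game with latencies `α e * x + β e`. -/
noncomputable def cost {n : ℕ} {E : Type*} [Fintype E] [DecidableEq E] (α β : E → ℝ)
    (S : Fin n → Finset E) (j : Fin n) : ℝ :=
  ∑ e ∈ S j, (α e * cong S e + β e)

/-- Altruistic cost of player `i` with social context matrix `Γ`. -/
noncomputable def acost {n : ℕ} {E : Type*} [Fintype E] [DecidableEq E] (α β : E → ℝ)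
    (Γ : Fin n → Fin n → ℝ) (S : Fin n → Finset E) (i : Fin n) : ℝ :=
  ∑ j, Γ i j * cost α β S j

/-- The potential function for the `Γ_V` altruistic social context. -/
noncomputable def potV {n : ℕ} {E : Type*} [Fintype E] [DecidableEq E] (α β : E → ℝ)
    (v : Fin n → ℝ) (S : Fin n → Finset E) : ℝ :=
  (1 / 2) * ∑ e, (α e * (cong S e * (cong S e + 1)
      - 2 * ∑ j ∈ Finset.univ.filter fun j => e ∈ S j, v j)
    + 2 * β e * ∑ j ∈ Finset.univ.filter fun j => e ∈ S j, (1 - v j))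

lemma sum_users_update {n : ℕ} {E : Type*} [Fintype E] [DecidableEq E]
    (S : Fin n → Finset E) (i : Fin n) (t : Finset E) (e : E) (g : Fin n → ℝ) :
    ∑ j ∈ Finset.univ.filter (fun j => e ∈ Function.update S i t j), g j
      = (∑ j ∈ Finset.univ.filter (fun j => e ∈ S j), g j)
        + ((if e ∈ t then g i else 0) - (if e ∈ S i then g i else 0)) := by
  rw [Finset.sum_filter, Finset.sum_filter]
  have h : ∀ j : Fin n, (if e ∈ Function.update S i t j then g j else 0)
      = (if e ∈ S j then g j else 0)
        + (if j = i then ((if e ∈ t then g i else 0) - (if e ∈ S i then g i else 0)) else 0) := by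
    intro j
    by_cases hj : j = i
    · subst hj
      simp only [Function.update_self, if_pos rfl]
      by_cases h1 : e ∈ t <;> by_cases h2 : e ∈ S j <;> simp [h1, h2]
    · simp [Function.update_of_ne hj, hj]
  simp_rw [h]
  rw [Finset.sum_add_distrib, Finset.sum_ite_eq' Finset.univ i]
  simp

lemma cong_update {n : ℕ} {E : Type*} [Fintype E] [DecidableEq E]
    (S : Fin n → Finset E) (i : Fin n) (t : Finset E) (e : E) :
    ((cong (Function.update S i t) e : ℝ))
      = (cong S e : ℝ) + ((if e ∈ t then 1 else 0) - (if e ∈ S i then 1 else 0)) := by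
  have := sum_users_update S i t e (fun _ => (1:ℝ))
  simpa [cong, Finset.sum_const, nsmul_eq_mul] using this

lemma cost_single {n : ℕ} {E : Type*} [Fintype E] [DecidableEq E] (α β : E → ℝ)
    (S : Fin n → Finset E) (j : Fin n) :
    cost α β S j = ∑ e, if e ∈ S j then (α e * cong S e + β e) else 0 := by
  rw [cost, Finset.sum_ite_mem, Finset.univ_inter]

lemma total_cost {n : ℕ} {E : Type*} [Fintype E] [DecidableEq E] (α β : E → ℝ)
    (S : Fin n → Finset E) :
    ∑ j, cost α β S j = ∑ e, (cong S e : ℝ) * (α e * cong S e + β e) := by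
  simp_rw [cost_single]
  rw [Finset.sum_comm]
  refine Finset.sum_congr rfl fun e _ => ?_
  rw [← Finset.sum_filter, Finset.sum_const, nsmul_eq_mul, cong]

lemma acost_eq {n : ℕ} {E : Type*} [Fintype E] [DecidableEq E] (α β : E → ℝ)
    (v : Fin n → ℝ) (Γ : Fin n → Fin n → ℝ)
    (hΓ : ∀ i j, Γ i j = if i = j then 1 - v i else v i)
    (S : Fin n → Finset E) (i : Fin n) :
    acost α β Γ S i = v i * (∑ j, cost α β S j) + (1 - 2 * v i) * cost α β S i := by
  rw [acost]
  have h : ∀ j : Fin n, Γ i j * cost α β S j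
      = v i * cost α β S j + (if j = i then (1 - 2 * v i) * cost α β S i else 0) := by
    intro j
    rw [hΓ]
    by_cases hj : j = i
    · subst hj; simp only [if_true, eq_self_iff_true]; ring
    · simp [Ne.symm hj, hj]
  simp_rw [h]
  rw [Finset.sum_add_distrib, Finset.sum_ite_eq' Finset.univ i, ← Finset.mul_sum]
  simp

theorem stmt11 {n : ℕ} {E : Type*} [Fintype E] [DecidableEq E]
    (α β : E → ℝ) (hα : ∀ e, 0 ≤ α e) (hβ : ∀ e, 0 ≤ β e)
    (v : Fin n → ℝ) (hv0 : ∀ i, 0 ≤ v i) (hv1 : ∀ i, v i ≤ 1)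
    (Γ : Fin n → Fin n → ℝ)
    (hΓ : ∀ i j, Γ i j = if i = j then 1 - v i else v i)
    (S : Fin n → Finset E) (i : Fin n) (t : Finset E) :
    acost α β Γ S i - acost α β Γ (Function.update S i t) i
      = potV α β v S - potV α β v (Function.update S i t) := by
  set S' := Function.update S i t with hS'
  have hti : S' i = t := Function.update_self i t S
  rw [acost_eq α β v Γ hΓ S i, acost_eq α β v Γ hΓ S' i,
    total_cost, total_cost, cost_single α β S i, cost_single α β S' i, hti,
    potV, potV]
  rw [Finset.mul_sum, Finset.mul_sum, Finset.mul_sum, Finset.mul_sum,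
    Finset.mul_sum, Finset.mul_sum,
    ← Finset.sum_add_distrib, ← Finset.sum_add_distrib,
    ← Finset.sum_sub_distrib, ← Finset.sum_sub_distrib]
  refine Finset.sum_congr rfl fun e _ => ?_
  have hm := cong_update S i t e
  have hσ := sum_users_update S i t e v
  have hτ := sum_users_update S i t e (fun j => 1 - v j)
  rw [← hS'] at hm hσ hτ
  rw [hm, hσ, hτ]
  by_cases h1 : e ∈ S i <;> by_cases h2 : e ∈ t <;>
    simp only [h1, h2, if_true, if_false, if_pos, if_neg] <;> ring
end

section
/- For any linear congestion game with restricted altruistic social context (G, Γ) with Γ symmetric and unit diagonal, the price of stability is at most 2: there exists a pure Nash equilibrium K such that SUM(K) ≤ 2·SUM(O) for every strategy profile O, where SUM(S) = Σ_{e∈E} α_e·n_e(S)². -/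
open Finset

/-- Social cost `SUM(S) = Σ_e α_e · n_e(S)²` for latencies `α_e · x`. -/
noncomputable def socialSum {n : ℕ} {E : Type*} [Fintype E] [DecidableEq E] (α : E → ℝ)
    (S : Fin n → Finset E) : ℝ :=
  ∑ e, α e * (cong S e : ℝ) ^ 2

/-- The set of players using resource `e`. -/
def users {n : ℕ} {E : Type*} [Fintype E] [DecidableEq E] (S : Fin n → Finset E) (e : E) :
    Finset (Fin n) := Finset.univ.filter fun j => e ∈ S j

lemma cong_eq_users_card {n : ℕ} {E : Type*} [Fintype E] [DecidableEq E]
    (S : Fin n → Finset E) (e : E) : cong S e = (users S e).card := rfl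

/-- Per-resource potential as a function of the set of users. -/
noncomputable def phiSet {n : ℕ} (Γ : Fin n → Fin n → ℝ) (A : Finset (Fin n)) : ℝ :=
  ((A.card : ℝ) * (A.card + 1) + ∑ i ∈ A, ∑ j ∈ A.erase i, Γ i j) / 2

/-- Per-resource altruistic cost of player `i` as a function of the set of users. -/
noncomputable def hSet {n : ℕ} (Γ : Fin n → Fin n → ℝ) (i : Fin n) (A : Finset (Fin n)) : ℝ :=
  (A.card : ℝ) * ∑ j ∈ A, Γ i j

/-- The potential function. -/
noncomputable def Phi {n : ℕ} {E : Type*} [Fintype E] [DecidableEq E]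
    (α : E → ℝ) (Γ : Fin n → Fin n → ℝ) (S : Fin n → Finset E) : ℝ :=
  ∑ e, α e * phiSet Γ (users S e)

lemma acost_eq_s13 {n : ℕ} {E : Type*} [Fintype E] [DecidableEq E]
    (α : E → ℝ) (Γ : Fin n → Fin n → ℝ) (S : Fin n → Finset E) (i : Fin n) :
    acost α (fun _ => 0) Γ S i = ∑ e, α e * hSet Γ i (users S e) := by
  unfold acost cost
  have h1 : ∀ j : Fin n, Γ i j * (∑ e ∈ S j, (α e * cong S e + (fun _ : E => 0) e))
      = ∑ e, (if e ∈ S j then α e * cong S e * Γ i j else 0) := by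
    intro j
    rw [Finset.sum_ite_mem, Finset.univ_inter, Finset.mul_sum]
    exact Finset.sum_congr rfl fun e _ => by ring
  simp only [h1]
  rw [Finset.sum_comm]
  refine Finset.sum_congr rfl fun e _ => ?_
  rw [← Finset.sum_filter]
  rw [← Finset.mul_sum, cong_eq_users_card]
  unfold hSet users
  ring

lemma hSet_insert {n : ℕ} (Γ : Fin n → Fin n → ℝ)
    (hdiag : ∀ i, Γ i i = 1) (hsym : ∀ i j, Γ i j = Γ j i)
    (i : Fin n) (A : Finset (Fin n)) (hi : i ∉ A) :
    hSet Γ i (insert i A) - hSet Γ i A = phiSet Γ (insert i A) - phiSet Γ A := by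
  have hc : ((insert i A).card : ℝ) = A.card + 1 := by
    rw [Finset.card_insert_of_notMem hi]; push_cast; ring
  have hsum : ∑ j ∈ insert i A, Γ i j = 1 + ∑ j ∈ A, Γ i j := by
    rw [Finset.sum_insert hi, hdiag]
  have hpair : ∑ a ∈ insert i A, ∑ b ∈ (insert i A).erase a, Γ a b
      = 2 * (∑ j ∈ A, Γ i j) + ∑ a ∈ A, ∑ b ∈ A.erase a, Γ a b := by
    rw [Finset.sum_insert hi, Finset.erase_insert hi]
    have h2 : ∀ a ∈ A, ∑ b ∈ (insert i A).erase a, Γ a b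
        = Γ a i + ∑ b ∈ A.erase a, Γ a b := by
      intro a ha
      have hne : a ≠ i := fun h => hi (h ▸ ha)
      rw [Finset.erase_insert_of_ne hne.symm,
        Finset.sum_insert (fun h => hi (Finset.mem_of_mem_erase h))]
    rw [Finset.sum_congr rfl h2, Finset.sum_add_distrib]
    have : ∑ a ∈ A, Γ a i = ∑ a ∈ A, Γ i a := Finset.sum_congr rfl fun a _ => (hsym i a).symm
    rw [this]; ring
  unfold hSet phiSet
  rw [hc, hsum, hpair]
  ring

lemma key {n : ℕ} (Γ : Fin n → Fin n → ℝ)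
    (hdiag : ∀ i, Γ i i = 1) (hsym : ∀ i j, Γ i j = Γ j i)
    (i : Fin n) (A B : Finset (Fin n)) (h : A.erase i = B.erase i) :
    hSet Γ i A - hSet Γ i B = phiSet Γ A - phiSet Γ B := by
  by_cases hA : i ∈ A <;> by_cases hB : i ∈ B
  · have hAB : A = B := by
      rw [← Finset.insert_erase hA, ← Finset.insert_erase hB, h]
    rw [hAB]; ring
  · have hB' : B = A.erase i := by rw [h, Finset.erase_eq_of_notMem hB]
    rw [hB']
    have := hSet_insert Γ hdiag hsym i (A.erase i) (Finset.notMem_erase i A)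
    rw [Finset.insert_erase hA] at this
    linarith
  · have hA' : A = B.erase i := by rw [← h, Finset.erase_eq_of_notMem hA]
    have hB' : B = insert i A := by rw [hA', Finset.insert_erase hB]
    rw [hB']
    have := hSet_insert Γ hdiag hsym i A (hA' ▸ Finset.notMem_erase i B)
    linarith
  · have hAB : A = B := by
      rw [← Finset.erase_eq_of_notMem hA, ← Finset.erase_eq_of_notMem hB, h]
    rw [hAB]; ring

lemma users_update_erase {n : ℕ} {E : Type*} [Fintype E] [DecidableEq E]
    (S : Fin n → Finset E) (i : Fin n) (t : Finset E) (e : E) :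
    (users (Function.update S i t) e).erase i = (users S e).erase i := by
  ext j
  simp only [Finset.mem_erase, users, Finset.mem_filter, Finset.mem_univ, true_and,
    Function.update_apply]
  constructor
  · rintro ⟨hj, hm⟩; rw [if_neg hj] at hm; exact ⟨hj, hm⟩
  · rintro ⟨hj, hm⟩; exact ⟨hj, by rw [if_neg hj]; exact hm⟩

lemma exact_potential {n : ℕ} {E : Type*} [Fintype E] [DecidableEq E]
    (α : E → ℝ) (Γ : Fin n → Fin n → ℝ)
    (hdiag : ∀ i, Γ i i = 1) (hsym : ∀ i j, Γ i j = Γ j i)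
    (S : Fin n → Finset E) (i : Fin n) (t : Finset E) :
    acost α (fun _ => 0) Γ (Function.update S i t) i - acost α (fun _ => 0) Γ S i
      = Phi α Γ (Function.update S i t) - Phi α Γ S := by
  rw [acost_eq_s13, acost_eq_s13]
  unfold Phi
  rw [← Finset.sum_sub_distrib, ← Finset.sum_sub_distrib]
  refine Finset.sum_congr rfl fun e _ => ?_
  rw [← mul_sub, ← mul_sub]
  congr 1
  exact key Γ hdiag hsym i _ _ (users_update_erase S i t e)

lemma sum_le_two_phi {n : ℕ} {E : Type*} [Fintype E] [DecidableEq E]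
    (α : E → ℝ) (hα : ∀ e, 0 ≤ α e) (Γ : Fin n → Fin n → ℝ)
    (hΓ0 : ∀ i j, 0 ≤ Γ i j) (S : Fin n → Finset E) :
    socialSum α S ≤ 2 * Phi α Γ S := by
  unfold socialSum Phi
  rw [Finset.mul_sum]
  refine Finset.sum_le_sum fun e _ => ?_
  rw [cong_eq_users_card]
  set A := users S e
  have hP : 0 ≤ ∑ i ∈ A, ∑ j ∈ A.erase i, Γ i j :=
    Finset.sum_nonneg fun i _ => Finset.sum_nonneg fun j _ => hΓ0 i j
  have hc : (0:ℝ) ≤ (A.card : ℝ) := Nat.cast_nonneg _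
  unfold phiSet
  have : ((A.card:ℝ))^2 ≤ 2 * ((((A.card:ℝ)) * (A.card + 1) + ∑ i ∈ A, ∑ j ∈ A.erase i, Γ i j) / 2) := by
    nlinarith
  calc α e * ((A.card:ℝ))^2 ≤ α e * (2 * ((((A.card:ℝ)) * (A.card + 1) + ∑ i ∈ A, ∑ j ∈ A.erase i, Γ i j) / 2)) :=
        mul_le_mul_of_nonneg_left this (hα e)
    _ = 2 * (α e * ((((A.card:ℝ)) * (A.card + 1) + ∑ i ∈ A, ∑ j ∈ A.erase i, Γ i j) / 2)) := by ring

lemma phi_le_sum {n : ℕ} {E : Type*} [Fintype E] [DecidableEq E]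
    (α : E → ℝ) (hα : ∀ e, 0 ≤ α e) (Γ : Fin n → Fin n → ℝ)
    (hΓ1 : ∀ i j, Γ i j ≤ 1) (S : Fin n → Finset E) :
    Phi α Γ S ≤ socialSum α S := by
  unfold Phi socialSum
  refine Finset.sum_le_sum fun e _ => ?_
  rw [cong_eq_users_card]
  set A := users S e
  refine mul_le_mul_of_nonneg_left ?_ (hα e)
  unfold phiSet
  have hP : ∑ i ∈ A, ∑ j ∈ A.erase i, Γ i j ≤ (A.card : ℝ) * ((A.card : ℝ) - 1) := by
    calc ∑ i ∈ A, ∑ j ∈ A.erase i, Γ i j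
        ≤ ∑ i ∈ A, ((A.card : ℝ) - 1) := by
          refine Finset.sum_le_sum fun i hi => ?_
          calc ∑ j ∈ A.erase i, Γ i j ≤ ∑ j ∈ A.erase i, (1:ℝ) :=
                Finset.sum_le_sum fun j _ => hΓ1 i j
            _ = ((A.erase i).card : ℝ) := by simp
            _ = (A.card : ℝ) - 1 := by
                rw [Finset.card_erase_of_mem hi]
                have : 1 ≤ A.card := Finset.card_pos.mpr ⟨i, hi⟩
                push_cast [Nat.cast_sub this]
                ring
      _ = (A.card : ℝ) * ((A.card : ℝ) - 1) := by
          rw [Finset.sum_const, nsmul_eq_mul]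
  nlinarith [hP]

theorem stmt13 {n : ℕ} {E : Type*} [Fintype E] [DecidableEq E]
    (α : E → ℝ) (hα : ∀ e, 0 ≤ α e)
    (Γ : Fin n → Fin n → ℝ)
    (hΓ0 : ∀ i j, 0 ≤ Γ i j) (hΓ1 : ∀ i j, Γ i j ≤ 1)
    (hdiag : ∀ i, Γ i i = 1) (hsym : ∀ i j, Γ i j = Γ j i)
    (Strat : Fin n → Finset (Finset E)) (hStrat : ∀ i, (Strat i).Nonempty) :
    ∃ K : Fin n → Finset E, (∀ i, K i ∈ Strat i) ∧
      (∀ i, ∀ t ∈ Strat i,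
        acost α (fun _ => 0) Γ K i ≤ acost α (fun _ => 0) Γ (Function.update K i t) i) ∧
      (∀ O : Fin n → Finset E, (∀ i, O i ∈ Strat i) →
        socialSum α K ≤ 2 * socialSum α O) := by
  classical
  let F : Finset (Fin n → Finset E) := Finset.univ.filter fun S => ∀ i, S i ∈ Strat i
  have hFne : F.Nonempty := by
    refine ⟨fun i => (hStrat i).choose, ?_⟩
    simp only [F, Finset.mem_filter, Finset.mem_univ, true_and]
    exact fun i => (hStrat i).choose_spec
  obtain ⟨K, hKF, hKmin⟩ := F.exists_min_image (Phi α Γ) hFne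
  have hKmem : ∀ i, K i ∈ Strat i := by
    have := Finset.mem_filter.mp hKF
    exact this.2
  refine ⟨K, hKmem, ?_, ?_⟩
  · intro i t ht
    have hup : Function.update K i t ∈ F := by
      simp only [F, Finset.mem_filter, Finset.mem_univ, true_and]
      intro j
      rcases eq_or_ne j i with rfl | hj
      · rw [Function.update_self]; exact ht
      · rw [Function.update_of_ne hj]; exact hKmem j
    have h1 := hKmin _ hup
    have h2 := exact_potential α Γ hdiag hsym K i t
    linarith
  · intro O hO
    have hOF : O ∈ F := by
      simp only [F, Finset.mem_filter, Finset.mem_univ, true_and]; exact hO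
    have h1 := hKmin _ hOF
    have h2 := sum_le_two_phi α hα Γ hΓ0 K
    have h3 := phi_le_sum α hα Γ hΓ1 O
    linarith
end
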